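/- Let F be a dyadic local field, n an even integer ≥ 2, and c ∈ F^×/F^{×2}. Let W₁ⁿ(c) = ℍ^{(n-2)/2} ⊥ [1,-c]. If W₂ⁿ(c) denotes the other (non-isometric) n-dimensional quadratic space with the same determinant (-1)^{n/2}c (defined whenever (n,c) ≠ (2,1)), then: for c = 1 and n ≥ 4, W₂ⁿ(1) ≅ ℍ^{(n-4)/2} ⊥ [1,-Δ,π,-Δπ]; for c = Δ, W₂ⁿ(Δ) ≅ ℍ^{(n-2)/2} ⊥ [π,-Δπ]; for a unit c = δ ∉ F^{×2}∪ΔF^{×2}, W₂ⁿ(δ) ≅ ℍ^{(n-2)/2} ⊥ [δ^#, -δ^# δ]; and for c = δπ with δ a unit, W₂ⁿ(δπ) ≅ ℍ^{(n-2)/2} ⊥ [Δ, -Δδπ]. -/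

import Mathlib

/-!
Witt cancellation (reflections act transitively on vectors of a given nonzero length) strips
off the hyperbolic planes, so it suffices to compare the spaces of dimension 2, resp. 4.
Since `F(√Δ)/F` is unramified, `v(Δ - t²)` is always even, hence every nonzero value of the
norm form `N = [1, -Δ]` has even valuation. In dimension 2, `[1, -c]` represents `1` while
`[π, -Δπ] = πN` and `[Δ, -Δδπ]` cannot (a parity clash of valuations), nor can
`[δ^#, -δ^#δ]` (that would make `(δ^#, δ)_𝔭 = 1`). In dimension 4, `ℍ ⊥ ℍ` is
isotropic while `N ⊥ πN = [1, -Δ, π, -Δπ]` is anisotropic, by the same parity argument.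
-/

noncomputable section
open scoped Classical

/-- A normalized discrete valuation on a field, written additively with values in `ℤ ∪ {∞}`. -/
structure NormDiscValuation (F : Type*) [Field F] : Type _ where
  v : F → WithTop ℤ
  v_zero : v 0 = ⊤
  v_ne_top : ∀ x : F, x ≠ 0 → v x ≠ ⊤
  v_mul : ∀ x y : F, v (x * y) = v x + v y
  v_add : ∀ x y : F, min (v x) (v y) ≤ v (x + y)
  v_surj : ∀ k : ℤ, ∃ x : F, v x = (k : WithTop ℤ)

variable {F : Type*}

/-- The order of the relative quadratic defect: `d(c) = ord (c⁻¹ 𝔡(c))`, where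
`𝔡(c) = ⋂_{x ∈ F} (c - x²) 𝒪_F`; the order of this intersection of principal fractional
ideals is the supremum of the orders `ord ((c - x²)/c)`. -/
def relDefect [Field F] (V : NormDiscValuation F) (c : F) : WithTop ℤ :=
  ⨆ x : F, V.v ((c - x ^ 2) / c)

/-- `(a, b)_𝔭 = 1` for the Hilbert symbol: `z² = a x² + b y²` has a nontrivial solution. -/
def HilbertOne [Field F] (a b : F) : Prop := ∃ x y : F, a * x ^ 2 + b * y ^ 2 = 1

/-- The diagonal quadratic space `[w 0, …, w (n-1)]`. -/
def diagQF [Field F] (n : ℕ) (w : Fin n → F) : QuadraticMap F (Fin n → F) F :=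
  QuadraticMap.weightedSumSquares F w

/-- `Q'` is represented by `Q`: there is an injective isometry from `Q'` into `Q`. -/
def QRep [Field F] {n k : ℕ} (Q : QuadraticMap F (Fin n → F) F)
    (Q' : QuadraticMap F (Fin k → F) F) : Prop :=
  ∃ f : Q' →qᵢ Q, Function.Injective f

/-- Weights of the diagonal space `ℍ^{(n-l)/2} ⊥ [t₁,…,t_l]`, where `l` is the length of
the list `tail` (each hyperbolic plane being `[1,-1]`). -/
def padDiag [Field F] (n : ℕ) (tail : List F) : Fin n → F := fun i =>
  if (i : ℕ) < n - tail.length then (if (i : ℕ) % 2 = 0 then 1 else -1)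
  else tail.getD ((i : ℕ) - (n - tail.length)) 0

/-- `w` spans a space of determinant `D` mod squares. -/
def DetEq [Field F] {n : ℕ} (w : Fin n → F) (D : F) : Prop :=
  ∃ t : F, t ≠ 0 ∧ (∏ i, w i) = D * t ^ 2

namespace QuadraticMap

lemma IsometryEquiv.polar_map {R M₁ M₂ N : Type*} [CommRing R] [AddCommGroup M₁]
    [AddCommGroup M₂] [AddCommGroup N] [Module R M₁] [Module R M₂] [Module R N]
    {Q₁ : QuadraticMap R M₁ N} {Q₂ : QuadraticMap R M₂ N} (f : Q₁.IsometryEquiv Q₂) (x y : M₁) :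
    polar Q₂ (f x) (f y) = polar Q₁ x y := by
  simp only [polar, ← map_add, f.map_app]

variable {K M M₁ M₂ : Type*} [Field K] [AddCommGroup M] [Module K M] [AddCommGroup M₁]
  [Module K M₁] [AddCommGroup M₂] [Module K M₂]

section Reflection

variable (Q : QuadraticMap K M K)

lemma polar_self_eq_two_mul (x : M) : polar Q x x = 2 * Q x := by
  rw [polar_self, two_nsmul, two_mul]

lemma inv_smul_polarBilin_self {w : M} (hw : Q w ≠ 0) :
    ((Q w)⁻¹ • Q.polarBilin w) w = 2 := by
  rw [LinearMap.smul_apply, polarBilin_apply_apply, polar_self_eq_two_mul, smul_eq_mul,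
    mul_left_comm, inv_mul_cancel₀ hw, mul_one]

def reflection {w : M} (hw : Q w ≠ 0) : Q.IsometryEquiv Q where
  toLinearEquiv := Module.reflection (Q.inv_smul_polarBilin_self hw)
  map_app' y := by
    change Q (Module.reflection _ y) = Q y
    rw [Module.reflection_apply, LinearMap.smul_apply, polarBilin_apply_apply, smul_eq_mul,
      sub_eq_add_neg, ← neg_smul, QuadraticMap.map_add Q, QuadraticMap.map_smul, polar_smul_right,
      polar_comm]
    simp only [smul_eq_mul]
    field_simp
    ring

lemma reflection_apply {w : M} (hw : Q w ≠ 0) (y : M) :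
    Q.reflection hw y = y - ((Q w)⁻¹ * polar Q w y) • w := by
  change Module.reflection (Q.inv_smul_polarBilin_self hw) y = _
  rw [Module.reflection_apply, LinearMap.smul_apply, polarBilin_apply_apply, smul_eq_mul]

lemma reflection_apply_of_polar_eq {w : M} (hw : Q w ≠ 0) {y : M} (h : polar Q w y = Q w) :
    Q.reflection hw y = y - w := by
  rw [reflection_apply, h, inv_mul_cancel₀ hw, one_smul]

@[simp]
lemma reflection_apply_self {w : M} (hw : Q w ≠ 0) : Q.reflection hw w = -w :=
  Module.reflection_apply_self (Q.inv_smul_polarBilin_self hw)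

theorem exists_isometryEquiv_apply_eq (h2 : (2 : K) ≠ 0) {u v : M} (huv : Q u = Q v)
    (hu : Q u ≠ 0) : ∃ σ : Q.IsometryEquiv Q, σ u = v := by
  have hadd : Q (u + v) = Q u + Q v + polar Q u v := by rw [polar]; ring
  have hsub : Q (u - v) = Q u + Q v - polar Q u v := by
    have h := polar_neg_right Q u v
    rw [polar, ← sub_eq_add_neg, QuadraticMap.map_neg] at h
    linear_combination h
  have hpolar : polar Q v u = polar Q u v := polar_comm Q v u
  by_cases hsub0 : Q (u - v) = 0
  · have hadd0 : Q (u + v) ≠ 0 := by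
      intro h
      exact mul_ne_zero (mul_ne_zero h2 h2) hu
        (by linear_combination h + hsub0 - hadd - hsub + 2 * huv)
    have hv : Q v ≠ 0 := huv ▸ hu
    refine ⟨(Q.reflection hadd0).trans (Q.reflection hv), ?_⟩
    have hu' : Q.reflection hadd0 u = -v := by
      rw [reflection_apply_of_polar_eq Q hadd0 (by
        rw [polar_add_left, polar_self_eq_two_mul, hpolar, hadd, huv]; ring)]
      abel
    change Q.reflection hv (Q.reflection hadd0 u) = v
    rw [hu', map_neg, reflection_apply_self, neg_neg]
  · refine ⟨Q.reflection hsub0, ?_⟩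
    rw [reflection_apply_of_polar_eq Q hsub0 (by
      rw [polar_sub_left, polar_self_eq_two_mul, hpolar, hsub, huv]; ring)]
    abel

end Reflection

section Cancel

variable {a : K} {Q₁ : QuadraticMap K M₁ K} {Q₂ : QuadraticMap K M₂ K}

lemma polar_smul_sq_prod_one_zero (a : K) (Q : QuadraticMap K M K) (p : K × M) :
    polar ((a • sq).prod Q) p (1, 0) = 2 * a * p.1 := by
  simp only [polar, prod_apply, Prod.fst_add, Prod.snd_add, smul_apply, sq_apply, smul_eq_mul,
    add_zero, mul_one, map_zero, add_sub_add_right_eq_sub]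
  ring

lemma IsometryEquiv.apply_zero_prod_of_apply_one_zero (h2 : (2 : K) ≠ 0) (ha : a ≠ 0)
    (g : ((a • sq).prod Q₁).IsometryEquiv ((a • sq).prod Q₂)) (hg : g (1, 0) = (1, 0))
    (m : M₁) : g (0, m) = (0, (g (0, m)).2) := by
  refine Prod.ext ?_ rfl
  have h := g.polar_map (0, m) (1, 0)
  rw [hg, polar_smul_sq_prod_one_zero, polar_smul_sq_prod_one_zero, mul_zero] at h
  exact (mul_eq_zero.mp h).resolve_left (mul_ne_zero h2 ha)

theorem Equivalent.of_smul_sq_prod (h2 : (2 : K) ≠ 0) (ha : a ≠ 0)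
    (h : ((a • sq).prod Q₁).Equivalent ((a • sq).prod Q₂)) : Q₁.Equivalent Q₂ := by
  obtain ⟨f⟩ := h
  obtain ⟨σ, hσ⟩ := ((a • sq).prod Q₂).exists_isometryEquiv_apply_eq h2 (u := f (1, 0))
    (v := (1, 0)) (by rw [f.map_app]; simp) (by rw [f.map_app]; simpa)
  set g := f.trans σ
  have hg : g (1, 0) = (1, 0) := hσ
  have hg' : g.symm (1, 0) = (1, 0) := by rw [g.symm_apply_eq, hg]
  have h₁ := g.apply_zero_prod_of_apply_one_zero h2 ha hg
  have h₂ := g.symm.apply_zero_prod_of_apply_one_zero h2 ha hg'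
  exact ⟨{
    toFun m := (g (0, m)).2
    invFun m := (g.symm (0, m)).2
    map_add' x y := by rw [← Prod.snd_add, ← map_add, Prod.mk_add_mk, zero_add]
    map_smul' c x := by rw [← Prod.smul_snd, ← map_smul, Prod.smul_mk, smul_zero]; rfl
    left_inv m := by
      change (g.symm (0, (g (0, m)).2)).2 = m
      rw [← h₁ m, g.symm_apply_apply]
    right_inv m := by
      change (g (0, (g.symm (0, m)).2)).2 = m
      rw [← h₂ m, g.apply_symm_apply]
    map_app' m := by
      change Q₂ (g (0, m)).2 = Q₁ m
      have h := g.map_app (0, m)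
      rw [h₁ m] at h
      simpa using h }⟩

end Cancel

end QuadraticMap

open QuadraticMap

lemma diagQF_apply [Field F] {n : ℕ} (w x : Fin n → F) :
    diagQF n w x = ∑ i, w i * x i ^ 2 := by
  simp [diagQF, weightedSumSquares_apply, _root_.sq]

lemma equivalent_diagQF_cons [Field F] {n : ℕ} (a : F) (w : Fin n → F) :
    ((a • QuadraticMap.sq).prod (diagQF n w)).Equivalent (diagQF (n + 1) (Fin.cons a w)) :=
  ⟨{ toLinearEquiv := Fin.consLinearEquiv F (fun _ => F)
     map_app' p := by simp [diagQF_apply, Fin.sum_univ_succ, _root_.sq] }⟩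

lemma QuadraticMap.Equivalent.of_diagQF_cons [Field F] (h2 : (2 : F) ≠ 0) {n : ℕ} {a : F}
    (ha : a ≠ 0) {w₁ w₂ : Fin n → F}
    (h : (diagQF (n + 1) (Fin.cons a w₁)).Equivalent (diagQF (n + 1) (Fin.cons a w₂))) :
    (diagQF n w₁).Equivalent (diagQF n w₂) :=
  Equivalent.of_smul_sq_prod h2 ha
    (((equivalent_diagQF_cons a w₁).trans h).trans (equivalent_diagQF_cons a w₂).symm)

section PadDiag

variable [Field F]

lemma padDiag_add_two {n : ℕ} {t : List F} (ht : t.length ≤ n) :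
    padDiag (n + 2) t = Fin.cons 1 (Fin.cons (-1) (padDiag n t)) := by
  funext i
  refine Fin.cases ?_ (fun j => Fin.cases ?_ (fun j' => ?_) j) i
  · simp [padDiag, show 0 < n + 2 - t.length by omega]
  · simp [padDiag, show 1 < n + 2 - t.length by omega]
  · by_cases hj : (j' : ℕ) < n - t.length
    · simp [padDiag, hj, show (j' : ℕ) + 1 + 1 < n + 2 - t.length by omega,
        show ((j' : ℕ) + 1 + 1) % 2 = (j' : ℕ) % 2 by omega]
    · simp [padDiag, hj, show ¬ (j' : ℕ) + 1 + 1 < n + 2 - t.length by omega,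
        show (j' : ℕ) + 1 + 1 - (n + 2 - t.length) = (j' : ℕ) - (n - t.length) by omega]

lemma padDiag_pair (a b : F) : padDiag 2 [a, b] = ![a, b] := by
  funext i
  fin_cases i <;> simp [padDiag]

lemma padDiag_quadruple (a b c d : F) : padDiag 4 [a, b, c, d] = ![a, b, c, d] := by
  funext i
  fin_cases i <;> simp [padDiag]

lemma padDiag_four_pair (a b : F) : padDiag 4 [a, b] = ![1, -1, a, b] := by
  funext i
  fin_cases i <;> simp [padDiag]

lemma prod_padDiag_length (t : List F) : ∏ i, padDiag t.length t i = t.prod := by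
  simp [padDiag, ← List.prod_ofFn]

lemma prod_padDiag_add_two_mul {t : List F} {k : ℕ} (ht : t.length ≤ k) (m : ℕ) :
    ∏ i, padDiag (k + 2 * m) t i = (-1) ^ m * ∏ i, padDiag k t i := by
  induction m with
  | zero => simp
  | succ m ih =>
    rw [show k + 2 * (m + 1) = k + 2 * m + 2 by ring, padDiag_add_two (by omega),
      Fin.prod_cons, Fin.prod_cons, ih, pow_succ]
    ring

lemma detEq_padDiag {t : List F} {n m : ℕ} (hn : n = t.length + 2 * m) (ht : Even t.length)
    {D s : F} (hs : s ≠ 0) (h : t.prod = (-1) ^ (t.length / 2) * D * s ^ 2) :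
    DetEq (padDiag n t) ((-1) ^ (n / 2) * D) := by
  subst hn
  refine ⟨s, hs, ?_⟩
  rw [prod_padDiag_add_two_mul le_rfl, prod_padDiag_length, h,
    show (t.length + 2 * m) / 2 = t.length / 2 + m by obtain ⟨r, hr⟩ := ht; omega, pow_add]
  ring

lemma detEq_padDiag_pair {a b D s : F} {n m : ℕ} (hn : n = 2 + 2 * m) (hs : s ≠ 0)
    (h : a * b = -D * s ^ 2) : DetEq (padDiag n [a, b]) ((-1) ^ (n / 2) * D) :=
  detEq_padDiag hn even_two hs (by simpa using h)

lemma detEq_padDiag_quadruple {a b c d D s : F} {n m : ℕ} (hn : n = 4 + 2 * m) (hs : s ≠ 0)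
    (h : a * b * c * d = D * s ^ 2) : DetEq (padDiag n [a, b, c, d]) ((-1) ^ (n / 2) * D) :=
  detEq_padDiag hn ⟨2, rfl⟩ hs (by simpa [mul_assoc] using h)

lemma QuadraticMap.Equivalent.of_padDiag_add_two_mul (h2 : (2 : F) ≠ 0) {t₁ t₂ : List F}
    {k : ℕ} (h₁ : t₁.length ≤ k) (h₂ : t₂.length ≤ k) (m : ℕ)
    (h : (diagQF (k + 2 * m) (padDiag (k + 2 * m) t₁)).Equivalent
      (diagQF (k + 2 * m) (padDiag (k + 2 * m) t₂))) :
    (diagQF k (padDiag k t₁)).Equivalent (diagQF k (padDiag k t₂)) := by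
  induction m with
  | zero => simpa using h
  | succ m ih =>
    rw [show k + 2 * (m + 1) = k + 2 * m + 2 by ring, padDiag_add_two (by omega),
      padDiag_add_two (by omega)] at h
    exact ih ((h.of_diagQF_cons h2 one_ne_zero).of_diagQF_cons h2 (neg_ne_zero.mpr one_ne_zero))

lemma not_equivalent_padDiag_of_forall_ne_one (h2 : (2 : F) ≠ 0) {a b c : F}
    (h : ∀ x y, a * x ^ 2 + b * y ^ 2 ≠ 1) {n m : ℕ} (hn : n = 2 + 2 * m) :
    ¬ (diagQF n (padDiag n [a, b])).Equivalent (diagQF n (padDiag n [1, c])) := by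
  intro hequiv
  subst hn
  have h' := hequiv.of_padDiag_add_two_mul h2 (by simp) (by simp) m
  rw [padDiag_pair, padDiag_pair] at h'
  obtain ⟨f⟩ := h'
  apply h (f.symm ![1, 0] 0) (f.symm ![1, 0] 1)
  have hrep := f.symm.map_app ![1, 0]
  rw [diagQF_apply, diagQF_apply] at hrep
  simpa [Fin.sum_univ_two] using hrep

lemma not_equivalent_padDiag_of_anisotropic (h2 : (2 : F) ≠ 0) {a b c d : F}
    (h : (diagQF 4 ![a, b, c, d]).Anisotropic) {n m : ℕ} (hn : n = 4 + 2 * m) :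
    ¬ (diagQF n (padDiag n [a, b, c, d])).Equivalent (diagQF n (padDiag n [1, -1])) := by
  intro hequiv
  subst hn
  have h' := hequiv.of_padDiag_add_two_mul h2 (by simp) (by simp) m
  rw [padDiag_quadruple, padDiag_four_pair] at h'
  obtain ⟨f⟩ := h'
  have hx := h (f.symm ![1, 1, 0, 0]) (by
    rw [f.symm.map_app]; simp [diagQF_apply, Fin.sum_univ_four])
  simpa using congrFun (f.symm.toLinearEquiv.map_eq_zero_iff.mp hx) 0

end PadDiag

lemma hilbertOne_of_eq_one [Field F] (h2 : (2 : F) ≠ 0) {a δ x y : F}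
    (h : a * x ^ 2 + -a * δ * y ^ 2 = 1) : HilbertOne a δ := by
  rcases eq_or_ne x 0 with rfl | hx
  · have hrel : a * δ * y ^ 2 = -1 := by linear_combination -h
    have ha : a ≠ 0 := by rintro rfl; simp at hrel
    have hy : y ≠ 0 := by rintro rfl; simp at hrel
    -- `δ = -1/(a y²)`, so `a X² + δ Y² = (a y X - Y)(a y X + Y)/(a y²)`:
    -- solve `a y X - Y = 1`, `a y X + Y = a y²`
    refine ⟨(1 + a * y ^ 2) / (2 * a * y), (a * y ^ 2 - 1) / 2, ?_⟩
    field_simp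
    linear_combination (a * y ^ 2 - 1) ^ 2 * hrel
  · refine ⟨(x ^ 2 - δ * y ^ 2) / x, y / x, ?_⟩
    field_simp
    linear_combination (x ^ 2 - δ * y ^ 2) * h

namespace NormDiscValuation

variable [Field F] (V : NormDiscValuation F)

lemma v_one : V.v 1 = 0 := by
  have h := V.v_mul 1 1
  rw [mul_one] at h
  lift V.v 1 to ℤ using V.v_ne_top 1 one_ne_zero with a
  have : a = a + a := by exact_mod_cast h
  simp [show a = 0 by omega]

def toAddValuation : AddValuation F (WithTop ℤ) :=
  AddValuation.of V.v V.v_zero V.v_one V.v_add V.v_mul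

@[simp]
lemma toAddValuation_apply (x : F) : V.toAddValuation x = V.v x := rfl

end NormDiscValuation

lemma WithTop.exists_eq_of_iSup_eq_coe {ι : Type*} [Nonempty ι] {f : ι → WithTop ℤ} {n : ℤ}
    (h : ⨆ i, f i = n) : ∃ i, f i = n := by
  by_contra! hne
  have hle : ⨆ i, f i ≤ ((n - 1 : ℤ) : WithTop ℤ) := by
    refine ciSup_le fun i => ?_
    have hlt : f i < n := lt_of_le_of_ne (h ▸ le_ciSup (OrderTop.bddAbove _) i) (hne i)
    obtain ⟨k, hk⟩ := WithTop.ne_top_iff_exists.mp hlt.ne_top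
    rw [← hk] at hlt ⊢
    exact_mod_cast Int.le_sub_one_of_lt (by exact_mod_cast hlt)
  rw [h] at hle
  have : n ≤ n - 1 := by exact_mod_cast hle
  omega

namespace AddValuation

variable {K : Type*} [Field K] (v : AddValuation K (WithTop ℤ))

def HasEvenVal (x : K) : Prop := ∃ k : ℤ, v x = ((2 * k : ℤ) : WithTop ℤ)

variable {v}

lemma HasEvenVal.ne_zero {x : K} (hx : v.HasEvenVal x) : x ≠ 0 := by
  obtain ⟨k, hk⟩ := hx
  exact (v.ne_top_iff).mp (hk ▸ WithTop.coe_ne_top)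

lemma HasEvenVal.mul {x y : K} (hx : v.HasEvenVal x) (hy : v.HasEvenVal y) :
    v.HasEvenVal (x * y) := by
  obtain ⟨k, hk⟩ := hx
  obtain ⟨l, hl⟩ := hy
  exact ⟨k + l, by rw [map_mul, hk, hl]; exact_mod_cast (by ring : 2 * k + 2 * l = 2 * (k + l))⟩

lemma hasEvenVal_of_eq_zero {x : K} (hx : v x = 0) : v.HasEvenVal x := ⟨0, by simpa using hx⟩

lemma hasEvenVal_sq {x : K} (hx : x ≠ 0) : v.HasEvenVal (x ^ 2) := by
  obtain ⟨k, hk⟩ := WithTop.ne_top_iff_exists.mp (v.ne_top_iff.mpr hx)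
  exact ⟨k, by rw [map_pow, ← hk]; norm_cast⟩

lemma HasEvenVal.neg {x : K} (hx : v.HasEvenVal x) : v.HasEvenVal (-x) := by
  rwa [HasEvenVal, map_neg]

lemma HasEvenVal.ne_mul_of_val_eq_one {π x y : K} (hπ : v π = 1) (hx : v.HasEvenVal x)
    (hy : v.HasEvenVal y) : x ≠ π * y := by
  rintro rfl
  obtain ⟨k, hk⟩ := hx
  obtain ⟨l, hl⟩ := hy
  rw [map_mul, hπ, hl] at hk
  have : 1 + 2 * l = 2 * k := by exact_mod_cast hk
  omega

variable {e : ℤ} {Δ : K}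

/-- Write `t = x₀ - s`, so that `Δ - t² = (Δ - x₀²) + s (2x₀ - s)`. If `v(s) ≥ e` the second
term has valuation `≥ 2e` and `v(Δ - t²) = 2e` by maximality; otherwise it has valuation
`2 v(s) < 2e` and dominates. -/
lemma hasEvenVal_sub_sq (he : v 2 = e) (hΔ : 0 ≤ v Δ)
    (hmax : ∀ x, v (Δ - x ^ 2) ≤ (2 * e : ℤ))
    {x₀ : K} (hx₀ : v (Δ - x₀ ^ 2) = (2 * e : ℤ)) (t : K) : v.HasEvenVal (Δ - t ^ 2) := by
  have he0 : 0 ≤ e := by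
    have h := v.map_add 1 1
    rw [map_one, min_self, one_add_one_eq_two, he] at h
    exact_mod_cast h
  have hx₀0 : 0 ≤ v x₀ := by
    by_contra! hneg
    obtain ⟨j, hj⟩ := WithTop.ne_top_iff_exists.mp (hneg.trans (WithTop.coe_lt_top 0)).ne
    rw [← hj] at hneg
    have hj0 : j < 0 := by exact_mod_cast hneg
    have hsq : v (x₀ ^ 2) = (2 * j : ℤ) := by rw [map_pow, ← hj]; norm_cast
    have hlt : v (x₀ ^ 2) < v Δ := hsq ▸ lt_of_lt_of_le (by exact_mod_cast (by omega)) hΔ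
    rw [v.map_sub_eq_of_lt_right hlt, hsq] at hx₀
    have : 2 * j = 2 * e := by exact_mod_cast hx₀
    omega
  have h2x₀ : (e : WithTop ℤ) ≤ v (2 * x₀) := by
    rw [map_mul, he]; exact le_add_of_nonneg_right hx₀0
  set s := x₀ - t
  have hsplit : Δ - t ^ 2 = (Δ - x₀ ^ 2) + s * (2 * x₀ - s) := by ring
  by_cases hs : (e : WithTop ℤ) ≤ v s
  · refine ⟨e, le_antisymm (hmax t) ?_⟩
    rw [hsplit]
    refine v.map_le_add hx₀.ge ?_
    rw [map_mul]
    calc ((2 * e : ℤ) : WithTop ℤ) = e + e := by norm_cast; ring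
      _ ≤ v s + v (2 * x₀ - s) := add_le_add hs (v.map_le_sub h2x₀ hs)
  · push Not at hs
    obtain ⟨j, hj⟩ := WithTop.ne_top_iff_exists.mp hs.ne_top
    have hje : j < e := by rw [← hj] at hs; exact_mod_cast hs
    have hprod : v (s * (2 * x₀ - s)) = (2 * j : ℤ) := by
      rw [map_mul, v.map_sub_eq_of_lt_right (hs.trans_le h2x₀), ← hj]; norm_cast; ring
    refine ⟨j, ?_⟩
    rw [hsplit, v.map_add_eq_of_lt_right (by rw [hprod, hx₀]; exact_mod_cast (by omega)), hprod]

section NormForm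

variable {π : K} (hdef : ∀ t, v.HasEvenVal (Δ - t ^ 2))
include hdef

lemma hasEvenVal_norm {a b : K} (hab : a ≠ 0 ∨ b ≠ 0) :
    v.HasEvenVal (a ^ 2 - Δ * b ^ 2) := by
  rcases eq_or_ne b 0 with rfl | hb
  · simpa using hasEvenVal_sq (hab.resolve_right (not_not.mpr rfl))
  · rw [show a ^ 2 - Δ * b ^ 2 = -b ^ 2 * (Δ - (a / b) ^ 2) by field_simp; ring]
    exact (hasEvenVal_sq hb).neg.mul (hdef _)

lemma eq_zero_of_norm_add_mul_norm_eq_zero (hπ : v π = 1) {a b c d : K}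
    (h : a ^ 2 - Δ * b ^ 2 + π * (c ^ 2 - Δ * d ^ 2) = 0) :
    a = 0 ∧ b = 0 ∧ c = 0 ∧ d = 0 := by
  have hπ0 : π ≠ 0 := v.ne_top_iff.mp (by simp [hπ])
  have hcd : c = 0 ∧ d = 0 := by
    by_contra hcd
    have hN := hasEvenVal_norm hdef (not_and_or.mp hcd)
    by_cases hab : a = 0 ∧ b = 0
    · obtain ⟨rfl, rfl⟩ := hab
      exact mul_ne_zero hπ0 hN.ne_zero (by simpa using h)
    · exact (hasEvenVal_norm hdef (not_and_or.mp hab)).ne_mul_of_val_eq_one hπ hN.neg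
        (by linear_combination h)
  obtain ⟨rfl, rfl⟩ := hcd
  by_contra hab
  exact (hasEvenVal_norm hdef (a := a) (b := b) (by tauto)).ne_zero (by simpa using h)

lemma anisotropic_diagQF_norm_add_mul_norm (hπ : v π = 1) :
    (diagQF 4 ![1, -Δ, π, -Δ * π]).Anisotropic := by
  intro x hx
  rw [diagQF_apply, Fin.sum_univ_four] at hx
  obtain ⟨h0, h1, h2, h3⟩ := eq_zero_of_norm_add_mul_norm_eq_zero hdef hπ (a := x 0) (b := x 1)
    (c := x 2) (d := x 3) (by
      simp only [Matrix.cons_val_zero, Matrix.cons_val_one, Matrix.cons_val] at hx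
      linear_combination hx)
  funext i
  fin_cases i <;> assumption

lemma mul_norm_ne_one (hπ : v π = 1) (a b : K) : π * a ^ 2 + -Δ * π * b ^ 2 ≠ 1 := by
  intro h
  by_cases hab : a = 0 ∧ b = 0
  · obtain ⟨rfl, rfl⟩ := hab
    simp at h
  · exact (hasEvenVal_of_eq_zero v.map_one).ne_mul_of_val_eq_one hπ
      (hasEvenVal_norm hdef (not_and_or.mp hab)) (by linear_combination -h)

lemma unit_mul_norm_ne_one (hπ : v π = 1) {δ : K} (hδ : v δ = 0) (a b : K) :
    Δ * a ^ 2 + -Δ * δ * π * b ^ 2 ≠ 1 := by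
  intro h
  have hN : v.HasEvenVal (1 ^ 2 - Δ * a ^ 2) := hasEvenVal_norm hdef (Or.inl one_ne_zero)
  rcases eq_or_ne b 0 with rfl | hb
  · exact hN.ne_zero (by linear_combination -h)
  · have hΔ : v.HasEvenVal Δ := by simpa using hdef 0
    exact hN.ne_mul_of_val_eq_one hπ
      ((hΔ.neg.mul (hasEvenVal_of_eq_zero hδ)).mul (hasEvenVal_sq hb))
      (by linear_combination -h)

end NormForm

end AddValuation

namespace NormDiscValuation

variable [Field F] (V : NormDiscValuation F)

lemma hasEvenVal_sub_sq {e : ℤ} (he : V.v 2 = e) {Δ : F} (hΔu : V.v Δ = 0)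
    (hΔd : relDefect V Δ = ((2 * e : ℤ) : WithTop ℤ)) (t : F) :
    V.toAddValuation.HasEvenVal (Δ - t ^ 2) := by
  have hsup : ⨆ x, V.toAddValuation (Δ - x ^ 2) = ((2 * e : ℤ) : WithTop ℤ) := by
    rw [← hΔd, relDefect]
    congr 1
    funext x
    rw [← toAddValuation_apply, AddValuation.map_div, toAddValuation_apply V Δ, hΔu, sub_zero]
  obtain ⟨x₀, hx₀⟩ := WithTop.exists_eq_of_iSup_eq_coe hsup
  exact AddValuation.hasEvenVal_sub_sq he hΔu.ge
    (fun x => hsup ▸ le_ciSup (f := fun x => V.toAddValuation (Δ - x ^ 2))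
      (OrderTop.bddAbove _) x) hx₀ t

end NormDiscValuation

/-- Since each determinant class contains at most two isometry classes, `W₂ⁿ(c) ≅ X` is
expressed as: `X` has determinant `(-1)^{n/2} c` and is not isometric to
`W₁ⁿ(c) = ℍ^{(n-2)/2} ⊥ [1,-c]`. -/
theorem W2_even_description_general [Field F]
    (V : NormDiscValuation F) (e : ℤ) (he : V.v 2 = (e : WithTop ℤ))
    (π Δ : F) (hπ : V.v π = ((1 : ℤ) : WithTop ℤ))
    (hΔu : V.v Δ = (0 : WithTop ℤ)) (hΔd : relDefect V Δ = ((2 * e : ℤ) : WithTop ℤ))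
    (n : ℕ) (hn2 : 2 ≤ n) (hne : Even n) :
    (4 ≤ n →
      DetEq (padDiag n [1, -Δ, π, -Δ * π]) ((-1 : F) ^ (n / 2)) ∧
      ¬ QuadraticMap.Equivalent (diagQF n (padDiag n [1, -Δ, π, -Δ * π]))
          (diagQF n (padDiag n ([1, -1] : List F)))) ∧
    (DetEq (padDiag n [π, -Δ * π]) ((-1 : F) ^ (n / 2) * Δ) ∧
      ¬ QuadraticMap.Equivalent (diagQF n (padDiag n [π, -Δ * π]))
          (diagQF n (padDiag n [1, -Δ]))) ∧
    (∀ δ δsharp : F, V.v δ = (0 : WithTop ℤ) → ¬ IsSquare δ → (¬ ∃ t : F, δ = Δ * t ^ 2) →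
      V.v δsharp = (0 : WithTop ℤ) → ¬ HilbertOne δsharp δ →
      DetEq (padDiag n [δsharp, -δsharp * δ]) ((-1 : F) ^ (n / 2) * δ) ∧
      ¬ QuadraticMap.Equivalent (diagQF n (padDiag n [δsharp, -δsharp * δ]))
          (diagQF n (padDiag n [1, -δ]))) ∧
    (∀ δ : F, V.v δ = (0 : WithTop ℤ) →
      DetEq (padDiag n [Δ, -Δ * δ * π]) ((-1 : F) ^ (n / 2) * δ * π) ∧
      ¬ QuadraticMap.Equivalent (diagQF n (padDiag n [Δ, -Δ * δ * π]))
          (diagQF n (padDiag n [1, -δ * π]))) := by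
  have hne0 : ∀ {x : F} {k : ℤ}, V.v x = k → x ≠ 0 := fun hx h0 => by
    simp [h0, V.v_zero] at hx
  have h2 : (2 : F) ≠ 0 := hne0 he
  have hdef := V.hasEvenVal_sub_sq he hΔu hΔd
  obtain ⟨m, hm⟩ : ∃ m, n = 2 + 2 * m := ⟨n / 2 - 1, by obtain ⟨r, hr⟩ := hne; omega⟩
  refine ⟨fun h4 => ⟨?_, ?_⟩, ⟨?_, ?_⟩, fun δ δs hδ _ _ hδs hH => ⟨?_, ?_⟩,
    fun δ hδ => ⟨?_, ?_⟩⟩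
  · rw [← mul_one ((-1 : F) ^ (n / 2))]
    exact detEq_padDiag_quadruple (m := m - 1) (by omega) (mul_ne_zero (hne0 hΔu) (hne0 hπ))
      (by ring)
  · exact not_equivalent_padDiag_of_anisotropic h2
      (AddValuation.anisotropic_diagQF_norm_add_mul_norm hdef hπ) (m := m - 1) (by omega)
  · exact detEq_padDiag_pair hm (hne0 hπ) (by ring)
  · exact not_equivalent_padDiag_of_forall_ne_one h2 (AddValuation.mul_norm_ne_one hdef hπ) hm
  · exact detEq_padDiag_pair hm (hne0 hδs) (by ring)
  · exact not_equivalent_padDiag_of_forall_ne_one h2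
      (fun x y h => hH (hilbertOne_of_eq_one h2 h)) hm
  · rw [mul_assoc ((-1 : F) ^ (n / 2))]
    exact detEq_padDiag_pair hm (hne0 hΔu) (by ring)
  · exact not_equivalent_padDiag_of_forall_ne_one h2
      (AddValuation.unit_mul_norm_ne_one hdef hπ hδ) hm

/-- explicit description of `W₂ⁿ(c)` for even `n`: in each case the listed
space has determinant `(-1)^{n/2} c` and is not isometric to `W₁ⁿ(c) = ℍ^{(n-2)/2} ⊥ [1,-c]`,
hence represents the second isometry class with that determinant. -/
theorem W2_even_description [Field F] [Algebra ℚ_[2] F] [FiniteDimensional ℚ_[2] F]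
    (V : NormDiscValuation F) (e : ℤ) (he : V.v 2 = (e : WithTop ℤ))
    (π Δ : F) (hπ : V.v π = ((1 : ℤ) : WithTop ℤ))
    (hΔu : V.v Δ = (0 : WithTop ℤ)) (hΔd : relDefect V Δ = ((2 * e : ℤ) : WithTop ℤ))
    (n : ℕ) (hn2 : 2 ≤ n) (hne : Even n) :
    (4 ≤ n →
      DetEq (padDiag n [1, -Δ, π, -Δ * π]) ((-1 : F) ^ (n / 2)) ∧
      ¬ QuadraticMap.Equivalent (diagQF n (padDiag n [1, -Δ, π, -Δ * π]))
          (diagQF n (padDiag n ([1, -1] : List F)))) ∧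
    (DetEq (padDiag n [π, -Δ * π]) ((-1 : F) ^ (n / 2) * Δ) ∧
      ¬ QuadraticMap.Equivalent (diagQF n (padDiag n [π, -Δ * π]))
          (diagQF n (padDiag n [1, -Δ]))) ∧
    (∀ δ δsharp : F, V.v δ = (0 : WithTop ℤ) → ¬ IsSquare δ → (¬ ∃ t : F, δ = Δ * t ^ 2) →
      V.v δsharp = (0 : WithTop ℤ) → ¬ HilbertOne δsharp δ →
      DetEq (padDiag n [δsharp, -δsharp * δ]) ((-1 : F) ^ (n / 2) * δ) ∧
      ¬ QuadraticMap.Equivalent (diagQF n (padDiag n [δsharp, -δsharp * δ]))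
          (diagQF n (padDiag n [1, -δ]))) ∧
    (∀ δ : F, V.v δ = (0 : WithTop ℤ) →
      DetEq (padDiag n [Δ, -Δ * δ * π]) ((-1 : F) ^ (n / 2) * δ * π) ∧
      ¬ QuadraticMap.Equivalent (diagQF n (padDiag n [Δ, -Δ * δ * π]))
          (diagQF n (padDiag n [1, -δ * π]))) :=
  W2_even_description_general V e he π Δ hπ hΔu hΔd n hn2 hne
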